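/- SeqPQ is closed under projection: for every e ∈ SeqPQ and every set D ⊆ 𝔻 of data values, the projection e|D belongs to SeqPQ; consequently proj(e) ⊆ SeqPQ for each e ∈ SeqPQ. -/

import Mathlib

open Classical

universe u v w

/-- Operation symbols of the priority queue: `put(a,p)`, `rm(a)`, and `rm(empty)`
(the latter carrying a data-value argument for uniformity). -/
inductive PQOp (D : Type u) (P : Type v) : Type (max u v) where
  | put (a : D) (p : P)
  | rm (a : D)
  | rmEmpty (a : D)

namespace PQOp
variable {D : Type u} {P : Type v}

/-- The data value of an operation symbol. -/
def val : PQOp D P → D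
  | put a _ => a
  | rm a => a
  | rmEmpty a => a

/-- Renaming of the data values of an operation symbol (priorities unchanged). -/
def rename (r : D → D) : PQOp D P → PQOp D P
  | put a p => put (r a) p
  | rm a => rm (r a)
  | rmEmpty a => rmEmpty (r a)

end PQOp

/-- Call and return actions of a concurrent execution, carrying operation identifiers. -/
inductive PQEvent (O : Type w) (D : Type u) (P : Type v) : Type (max u v w) where
  | call (o : O) (m : PQOp D P)
  | ret (o : O) (m : PQOp D P)

namespace PQEvent
variable {O : Type w} {D : Type u} {P : Type v}

/-- The operation identifier of an action. -/
def ident : PQEvent O D P → O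
  | call o _ => o
  | ret o _ => o

/-- The method (with arguments) of an action. -/
def meth : PQEvent O D P → PQOp D P
  | call _ m => m
  | ret _ m => m

/-- The data value of an action. -/
def val (a : PQEvent O D P) : D := a.meth.val

/-- Renaming of the data values of an action (identifiers and priorities unchanged). -/
def rename (r : D → D) : PQEvent O D P → PQEvent O D P
  | call o m => call o (m.rename r)
  | ret o m => ret o (m.rename r)

end PQEvent

section PQ

variable {D : Type u} {P : Type v} {O : Type w} [PartialOrder P]

/-- States of the priority-queue LTS: maps from priorities to finite sequences of values. -/
abbrev PQState (D : Type u) (P : Type v) := P → List D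

/-- The initial state of the priority-queue LTS. -/
def pqInit (D : Type u) (P : Type v) : PQState D P := fun _ => []

/-- One transition of the priority-queue LTS. -/
def pqStep (q : PQState D P) : PQOp D P → PQState D P → Prop
  | PQOp.put a p, q' => q' p = a :: q p ∧ ∀ p', p' ≠ p → q' p' = q p'
  | PQOp.rm a, q' => ∃ p l, q p = l ++ [a] ∧ q' p = l ∧ (∀ p', p' ≠ p → q' p' = q p') ∧
      (∀ p', p' < p → q p' = [])
  | PQOp.rmEmpty _, q' => q' = q ∧ ∀ p, q p = []

/-- Paths of the priority-queue LTS. -/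
inductive pqReach : PQState D P → List (PQOp D P) → PQState D P → Prop where
  | nil (q : PQState D P) : pqReach q [] q
  | cons {q q' q'' : PQState D P} {op : PQOp D P} {l : List (PQOp D P)} :
      pqStep q op q' → pqReach q' l q'' → pqReach q (op :: l) q''

/-- `SeqPQ`: the set of traces of the priority-queue LTS. -/
def SeqPQ (e : List (PQOp D P)) : Prop := ∃ q, pqReach (pqInit D P) e q

/-- A sequential execution is data-differentiated if each value is put at most once. -/
def SeqDiff (e : List (PQOp D P)) : Prop :=
  ∀ (i j : ℕ) a p p', e[i]? = some (PQOp.put a p) → e[j]? = some (PQOp.put a p') → i = j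

/-- The priorities occurring in put operations of a sequential execution. -/
def prioritiesSeq (e : List (PQOp D P)) : Set P := {p | ∃ a, PQOp.put a p ∈ e}

/-- The priorities of unmatched put operations of a sequential execution. -/
def unmatchedPrioritiesSeq (e : List (PQOp D P)) : Set P :=
  {p | ∃ a, PQOp.put a p ∈ e ∧ PQOp.rm a ∉ e}

/-- Every put is matched by a remove. -/
def matchedSeq (e : List (PQOp D P)) : Prop :=
  ∀ a p, PQOp.put a p ∈ e → PQOp.rm a ∈ e

/-- Every put with priority strictly below `p` is matched. -/
def matchedBelowSeq (e : List (PQOp D P)) (p : P) : Prop :=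
  ∀ a q, PQOp.put a q ∈ e → q < p → PQOp.rm a ∈ e

def HasEmptyRemovesSeq (e : List (PQOp D P)) : Prop := ∃ d, PQOp.rmEmpty d ∈ e

def HasUnmatchedMaxPrioritySeq (e : List (PQOp D P)) : Prop :=
  ∃ p, p ∈ prioritiesSeq e ∧ (∀ q ∈ prioritiesSeq e, ¬ p < q) ∧
    p ∈ unmatchedPrioritiesSeq e

def UnmatchedMaxPrioritySeqP (e : List (PQOp D P)) (x : D) (p : P) : Prop :=
  ∃ u v, e = u ++ PQOp.put x p :: v ∧
    (∀ q ∈ prioritiesSeq (u ++ v), ¬ p < q) ∧ p ∉ prioritiesSeq v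

def UnmatchedMaxPrioritySeq (e : List (PQOp D P)) (x : D) : Prop :=
  ∃ p, UnmatchedMaxPrioritySeqP e x p

def MatchedMaxPrioritySeqP (e : List (PQOp D P)) (x : D) (p : P) : Prop :=
  ∃ u v w, e = u ++ PQOp.put x p :: (v ++ PQOp.rm x :: w) ∧
    (∀ q ∈ prioritiesSeq (u ++ v ++ w), ¬ p < q) ∧
    (∀ q ∈ unmatchedPrioritiesSeq (u ++ v ++ w), ¬ p ≤ q) ∧
    matchedBelowSeq (u ++ v) p ∧ p ∉ prioritiesSeq (v ++ w)

def MatchedMaxPrioritySeq (e : List (PQOp D P)) (x : D) : Prop :=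
  ∃ p, MatchedMaxPrioritySeqP e x p

/-- `MatchedMaxPriority^=`: additionally at least one value other than `x` has priority `p`. -/
def MatchedMaxPriorityEqSeq (e : List (PQOp D P)) (x : D) : Prop :=
  ∃ p, MatchedMaxPrioritySeqP e x p ∧ ∃ z, z ≠ x ∧ PQOp.put z p ∈ e

noncomputable def projSeqVals (Dset : Set D) (e : List (PQOp D P)) : List (PQOp D P) :=
  e.filter fun op => decide (op.val ∈ Dset)

noncomputable def removeValSeq (x : D) (e : List (PQOp D P)) : List (PQOp D P) :=
  e.filter fun op => decide (op.val ≠ x)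

/-- Projection of a sequential execution to a set of positions. -/
noncomputable def seqProjIdx (l : List (PQOp D P)) (I : Set ℕ) : List (PQOp D P) :=
  ((List.zip (List.range l.length) l).filter fun x => decide (x.1 ∈ I)).map Prod.snd

/-- The recursive procedure `Check-PQ-Seq`. -/
inductive CheckPQSeq : List (PQOp D P) → Prop where
  | nil : CheckPQSeq ([] : List (PQOp D P))
  | emptyRemove (u v : List (PQOp D P)) (d : D) :
      matchedSeq u → CheckPQSeq (u ++ v) →
      CheckPQSeq (u ++ PQOp.rmEmpty d :: v)
  | unmatchedMax (e : List (PQOp D P)) (x : D) :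
      ¬ HasEmptyRemovesSeq e → HasUnmatchedMaxPrioritySeq e →
      UnmatchedMaxPrioritySeq e x → CheckPQSeq (removeValSeq x e) → CheckPQSeq e
  | matchedMax (e : List (PQOp D P)) (x : D) :
      ¬ HasEmptyRemovesSeq e → ¬ HasUnmatchedMaxPrioritySeq e →
      MatchedMaxPrioritySeq e x → CheckPQSeq (removeValSeq x e) → CheckPQSeq e

/-- Well-formed (completed) executions. -/
def IsExec (e : List (PQEvent O D P)) : Prop :=
  (∀ (i j : ℕ) o m m', e[i]? = some (PQEvent.call o m) → e[j]? = some (PQEvent.call o m') → i = j) ∧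
  (∀ (i j : ℕ) o m m', e[i]? = some (PQEvent.ret o m) → e[j]? = some (PQEvent.ret o m') → i = j) ∧
  (∀ (j : ℕ) o m, e[j]? = some (PQEvent.ret o m) → ∃ i < j, e[i]? = some (PQEvent.call o m)) ∧
  (∀ (i : ℕ) o m, e[i]? = some (PQEvent.call o m) → ∃ j, i < j ∧ e[j]? = some (PQEvent.ret o m))

/-- The operations (identifiers) of an execution. -/
def opsOf (e : List (PQEvent O D P)) : Set O :=
  {o | ∃ (i : ℕ) (m : PQOp D P), e[i]? = some (PQEvent.call o m)}

/-- Operation `o` has method (and arguments) `m` in `e`. -/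
def hasMethod (e : List (PQEvent O D P)) (o : O) (m : PQOp D P) : Prop :=
  ∃ i : ℕ, e[i]? = some (PQEvent.call o m)

/-- Happens-before: the return of `o1` occurs before the call of `o2`. -/
def hb (e : List (PQEvent O D P)) (o1 o2 : O) : Prop :=
  ∃ (i j : ℕ) (m1 m2 : PQOp D P), i < j ∧ e[i]? = some (PQEvent.ret o1 m1) ∧ e[j]? = some (PQEvent.call o2 m2)

/-- `f` witnesses that the sequential execution `l` is a linearization of `e`. -/
def IsLin (e : List (PQEvent O D P)) (l : List (PQOp D P)) (f : O → ℕ) : Prop :=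
  Set.BijOn f (opsOf e) {i | i < l.length} ∧
  (∀ o m, hasMethod e o m → l[f o]? = some m) ∧
  (∀ o1 o2, hb e o1 o2 → f o1 < f o2)

/-- `e ⊑ l`: `e` is linearizable w.r.t. the sequential execution `l`. -/
def LinTo (e : List (PQEvent O D P)) (l : List (PQOp D P)) : Prop := ∃ f, IsLin e l f

/-- A concurrent execution is data-differentiated if each value is put at most once. -/
def ExecDiff (e : List (PQEvent O D P)) : Prop :=
  ∀ (i j : ℕ) o o' a p p', e[i]? = some (PQEvent.call o (PQOp.put a p)) →
    e[j]? = some (PQEvent.call o' (PQOp.put a p')) → i = j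

/-- Projection of an execution to a set of data values. -/
noncomputable def projVals (Dset : Set D) (e : List (PQEvent O D P)) : List (PQEvent O D P) :=
  e.filter fun a => decide (a.val ∈ Dset)

/-- `e ∖ x`. -/
noncomputable def removeValE (x : D) (e : List (PQEvent O D P)) : List (PQEvent O D P) :=
  e.filter fun a => decide (a.val ≠ x)

/-- `e ∖ o` for an operation identifier `o`. -/
noncomputable def removeIdE (o : O) (e : List (PQEvent O D P)) : List (PQEvent O D P) :=
  e.filter fun a => decide (a.ident ≠ o)

/-- Projection of an execution to a set of operations. -/
noncomputable def projIds (S : Set O) (e : List (PQEvent O D P)) : List (PQEvent O D P) :=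
  e.filter fun a => decide (a.ident ∈ S)

def putOccurs (e : List (PQEvent O D P)) (a : D) (p : P) : Prop :=
  ∃ o, hasMethod e o (PQOp.put a p)

def rmOccurs (e : List (PQEvent O D P)) (a : D) : Prop :=
  ∃ o, hasMethod e o (PQOp.rm a)

def prioritiesE (e : List (PQEvent O D P)) : Set P := {p | ∃ a, putOccurs e a p}

def HasEmptyRemovesE (e : List (PQEvent O D P)) : Prop :=
  ∃ o d, hasMethod e o (PQOp.rmEmpty d)

def HasUnmatchedMaxPriorityE (e : List (PQEvent O D P)) : Prop :=
  ∃ p, p ∈ prioritiesE e ∧ (∀ q ∈ prioritiesE e, ¬ p < q) ∧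
    ∃ a, putOccurs e a p ∧ ¬ rmOccurs e a

def HasMatchedMaxPriorityE (e : List (PQEvent O D P)) : Prop :=
  ¬ HasEmptyRemovesE e ∧ ¬ HasUnmatchedMaxPriorityE e

/-- `EmptyRemove-Conc(e,o)`: some linearization of `e` places the `rm(empty)` operation `o`
after a matched prefix. -/
def EmptyRemoveConc (e : List (PQEvent O D P)) (o : O) : Prop :=
  ∃ l f, IsLin e l f ∧ (∃ d, hasMethod e o (PQOp.rmEmpty d)) ∧ matchedSeq (l.take (f o))

def UnmatchedMaxPriorityConc (e : List (PQEvent O D P)) (x : D) : Prop :=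
  ∃ l, LinTo e l ∧ UnmatchedMaxPrioritySeq l x

def MatchedMaxPriorityConc (e : List (PQEvent O D P)) (x : D) : Prop :=
  ∃ l, LinTo e l ∧ MatchedMaxPrioritySeq l x

def MatchedMaxPriorityEqConc (e : List (PQEvent O D P)) (x : D) : Prop :=
  ∃ l, LinTo e l ∧ MatchedMaxPriorityEqSeq l x

/-- The recursive procedure `Check-PQ-Conc`. -/
inductive CheckPQConc : List (PQEvent O D P) → Prop where
  | nil : CheckPQConc ([] : List (PQEvent O D P))
  | emptyRemove (e : List (PQEvent O D P)) (o : O) :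
      HasEmptyRemovesE e → EmptyRemoveConc e o →
      CheckPQConc (removeIdE o e) → CheckPQConc e
  | unmatchedMax (e : List (PQEvent O D P)) (x : D) :
      ¬ HasEmptyRemovesE e → HasUnmatchedMaxPriorityE e →
      UnmatchedMaxPriorityConc e x → CheckPQConc (removeValE x e) → CheckPQConc e
  | matchedMax (e : List (PQEvent O D P)) (x : D) :
      ¬ HasEmptyRemovesE e → ¬ HasUnmatchedMaxPriorityE e →
      MatchedMaxPriorityConc e x → CheckPQConc (removeValE x e) → CheckPQConc e

/-- The procedure `Check-PQ-Conc-NonRec`: `Check-PQ-Conc` with recursive calls replaced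
by `true`. -/
def CheckPQConcNR (e : List (PQEvent O D P)) : Prop :=
  e = [] ∨
  (HasEmptyRemovesE e ∧ ∃ o, EmptyRemoveConc e o) ∨
  (¬ HasEmptyRemovesE e ∧ HasUnmatchedMaxPriorityE e ∧ ∃ x, UnmatchedMaxPriorityConc e x) ∨
  (¬ HasEmptyRemovesE e ∧ ¬ HasUnmatchedMaxPriorityE e ∧ ∃ x, MatchedMaxPriorityConc e x)

def isPutOf (e : List (PQEvent O D P)) (o : O) (a : D) : Prop :=
  ∃ p, hasMethod e o (PQOp.put a p)

def isRmOf (e : List (PQEvent O D P)) (o : O) (a : D) : Prop :=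
  hasMethod e o (PQOp.rm a)

def opValIs (e : List (PQEvent O D P)) (o : O) (a : D) : Prop :=
  isPutOf e o a ∨ isRmOf e o a

def putPutHB (e : List (PQEvent O D P)) (a b : D) : Prop :=
  ∃ o1 o2, isPutOf e o1 a ∧ isPutOf e o2 b ∧ hb e o1 o2

def putRmHB (e : List (PQEvent O D P)) (a b : D) : Prop :=
  ∃ o1 o2, isPutOf e o1 a ∧ isRmOf e o2 b ∧ hb e o1 o2

def rmRmHB (e : List (PQEvent O D P)) (a b : D) : Prop :=
  ∃ o1 o2, isRmOf e o1 a ∧ isRmOf e o2 b ∧ hb e o1 o2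

def rmPutHB (e : List (PQEvent O D P)) (a b : D) : Prop :=
  ∃ o1 o2, isRmOf e o1 a ∧ isPutOf e o2 b ∧ hb e o1 o2

/-- The values occurring in an execution. -/
def valuesOfE (e : List (PQEvent O D P)) : Set D := {a | ∃ o, opValIs e o a}

/-- The left-right constraint of `x`: edges of the graph `G`. -/
def lrEdge (e : List (PQEvent O D P)) (x : D) (d1 d2 : D) : Prop :=
  d1 ∈ valuesOfE e ∧ d2 ∈ valuesOfE e ∧
  ((d2 = x ∧ (putPutHB e d1 x ∨ putRmHB e d1 x)) ∨
   (d1 = x ∧ (rmRmHB e x d2 ∨ ¬ rmOccurs e d2)) ∨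
   putRmHB e d1 d2)

/-- `p` is the unique maximal priority occurring in `e`. -/
def UniqueMaxPriorityE (e : List (PQEvent O D P)) (p : P) : Prop :=
  p ∈ prioritiesE e ∧ ∀ q ∈ prioritiesE e, q ≠ p → q < p

/-- The values added with priority `q` in `e`. -/
def valsOfPri (e : List (PQEvent O D P)) (q : P) : Set D := {a | putOccurs e a q}

/-- For each priority, the projection of `e` to the values of that priority is
linearizable w.r.t. `SeqPQ`. -/
def SinglePriLin (e : List (PQEvent O D P)) : Prop :=
  ∀ q : P, ∃ l, SeqPQ l ∧ LinTo (projVals (valsOfPri e q) e) l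

def callPutAt (e : List (PQEvent O D P)) (a : D) (p : P) (i : ℕ) : Prop :=
  ∃ o, e[i]? = some (PQEvent.call o (PQOp.put a p))

def retPutAt (e : List (PQEvent O D P)) (a : D) (i : ℕ) : Prop :=
  ∃ o p, e[i]? = some (PQEvent.ret o (PQOp.put a p))

def callRmAt (e : List (PQEvent O D P)) (a : D) (i : ℕ) : Prop :=
  ∃ o, e[i]? = some (PQEvent.call o (PQOp.rm a))

def retRmAt (e : List (PQEvent O D P)) (a : D) (i : ℕ) : Prop :=
  ∃ o, e[i]? = some (PQEvent.ret o (PQOp.rm a))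

/-- Index `i` lies in the interval of value `z`: from `ret(put,z,_)` to `call(rm,z)`,
or to the last index of `e` if `rm(z)` is absent. -/
def InInterval (e : List (PQEvent O D P)) (z : D) (i : ℕ) : Prop :=
  ∃ j, retPutAt e z j ∧ j ≤ i ∧
    ((∃ k, callRmAt e z k ∧ i ≤ k) ∨ (¬ rmOccurs e z ∧ i ≤ e.length - 1))

/-- Gap-points of a value `x` of priority `p`. -/
def GapPoint (e : List (PQEvent O D P)) (x : D) (p : P) (i : ℕ) : Prop :=
  i < e.length ∧
  (∃ j, callPutAt e x p j ∧ j ≤ i) ∧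
  (∃ j, callRmAt e x j ∧ j ≤ i) ∧
  (∃ j, retRmAt e x j ∧ i < j) ∧
  ∀ z q, putOccurs e z q → q < p → ¬ InInterval e z i

def pbA (e : List (PQEvent O D P)) (a b : D) : Prop := putPutHB e a b
def pbB (e : List (PQEvent O D P)) (a b : D) : Prop := rmRmHB e a b
def pbC (e : List (PQEvent O D P)) (a b : D) : Prop := rmPutHB e a b
def pb (e : List (PQEvent O D P)) (a b : D) : Prop := pbA e a b ∨ pbB e a b ∨ pbC e a b
def pbStar (e : List (PQEvent O D P)) : D → D → Prop := Relation.TransGen (pb e)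

/-- The levels `UVSet_i(e,x)` (indexed from 0). -/
def UVSetN (e : List (PQEvent O D P)) (x : D) : ℕ → Set O
  | 0 => {o | ∃ a, a ≠ x ∧ opValIs e o a ∧ ∃ o', opValIs e o' a ∧
        ∃ ox, (isPutOf e ox x ∨ isRmOf e ox x) ∧ hb e o' ox}
  | n + 1 => {o | (∀ k, k ≤ n → o ∉ UVSetN e x k) ∧
        ∃ a, opValIs e o a ∧ ∃ o', opValIs e o' a ∧
          ∃ o'', o'' ∈ UVSetN e x n ∧ hb e o' o''}
  termination_by n => n
  decreasing_by all_goals omega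

def UVSet (e : List (PQEvent O D P)) (x : D) : Set O := ⋃ n, UVSetN e x n

/-- Data independence of a set of sequential executions. -/
def DataIndepSeqSet (S : Set (List (PQOp D P))) : Prop :=
  (∀ e ∈ S, ∃ e' ∈ S, SeqDiff e' ∧ ∃ r : D → D, e = e'.map (PQOp.rename r)) ∧
  (∀ e ∈ S, ∀ r : D → D, e.map (PQOp.rename r) ∈ S)

/-- Data independence of a set of (concurrent) executions. -/
def DataIndepExecSet (E : Set (List (PQEvent O D P))) : Prop :=
  (∀ e ∈ E, ∃ e' ∈ E, ExecDiff e' ∧ ∃ r : D → D, e = e'.map (PQEvent.rename r)) ∧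
  (∀ e ∈ E, ∀ r : D → D, e.map (PQEvent.rename r) ∈ E)

/-- `e|⪯p`: projection of `e` to the values whose priority is `⪯ p`. -/
noncomputable def projLE (e : List (PQEvent O D P)) (p : P) : List (PQEvent O D P) :=
  projVals {a | ∃ q, putOccurs e a q ∧ q ≤ p} e

/-- `e` is `UnmatchedMaxPriority`-linearizable. -/
def UnmatchedLin (e : List (PQEvent O D P)) : Prop :=
  HasUnmatchedMaxPriorityE e → ∃ x, UnmatchedMaxPriorityConc e x

/-- `e` is `MatchedMaxPriority`-linearizable. -/
def MatchedLin (e : List (PQEvent O D P)) : Prop :=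
  HasMatchedMaxPriorityE e → ∃ x, MatchedMaxPriorityConc e x

def comparablePri (p q : P) : Prop := p ≤ q ∨ q ≤ p

/-- The operation symbol `op` is on a value whose priority (in `l`) is comparable with `p`. -/
def opComparable (l : List (PQOp D P)) (p : P) (op : PQOp D P) : Prop :=
  ∃ q, PQOp.put op.val q ∈ l ∧ comparablePri p q

/-- `op` is a put with priority `p`. -/
def isPutPri (p : P) (op : PQOp D P) : Prop := ∃ a, op = PQOp.put a p

end PQ

section ProjAux

variable {D : Type u} {P : Type v} [PartialOrder P]

/-- Filter a state to a set of values. -/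
noncomputable def filterState (Dset : Set D) (q : PQState D P) : PQState D P :=
  fun p => (q p).filter fun a => decide (a ∈ Dset)

lemma pqStep_filter {Dset : Set D} {q q' : PQState D P} {op : PQOp D P}
    (h : pqStep q op q') :
    (op.val ∈ Dset ∧ pqStep (filterState Dset q) op (filterState Dset q')) ∨
    (op.val ∉ Dset ∧ filterState Dset q' = filterState Dset q) := by
  classical
  cases op with
  | put a p =>
    obtain ⟨h1, h2⟩ := h
    by_cases ha : a ∈ Dset
    · left
      refine ⟨ha, ?_, ?_⟩
      · simp [filterState, h1, List.filter_cons, ha]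
      · intro p' hp'; simp [filterState, h2 p' hp']
    · right
      refine ⟨ha, funext fun p' => ?_⟩
      by_cases hp : p' = p
      · subst hp; simp [filterState, h1, List.filter_cons, ha]
      · simp [filterState, h2 p' hp]
  | rm a =>
    obtain ⟨p, l, h1, h2, h3, h4⟩ := h
    by_cases ha : a ∈ Dset
    · left
      refine ⟨ha, p, (l.filter fun a => decide (a ∈ Dset)), ?_, ?_, ?_, ?_⟩
      · simp [filterState, h1, List.filter_append, ha]
      · simp [filterState, h2]
      · intro p' hp'; simp [filterState, h3 p' hp']
      · intro p' hp'; simp [filterState, h4 p' hp']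
    · right
      refine ⟨ha, funext fun p' => ?_⟩
      by_cases hp : p' = p
      · subst hp; simp [filterState, h1, h2, List.filter_append, ha]
      · simp [filterState, h3 p' hp]
  | rmEmpty a =>
    obtain ⟨h1, h2⟩ := h
    subst h1
    by_cases ha : a ∈ Dset
    · left
      exact ⟨ha, rfl, fun p => by simp [filterState, h2 p]⟩
    · right
      exact ⟨ha, rfl⟩

lemma pqReach_filter {Dset : Set D} {q q' : PQState D P} {e : List (PQOp D P)}
    (h : pqReach q e q') :
    pqReach (filterState Dset q) (projSeqVals Dset e) (filterState Dset q') := by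
  classical
  induction h with
  | nil q => exact pqReach.nil _
  | cons hstep _ ih =>
    rcases pqStep_filter (Dset := Dset) hstep with ⟨hmem, hstep'⟩ | ⟨hmem, heq⟩
    · rw [projSeqVals, List.filter_cons, if_pos (by simpa using hmem)]
      exact pqReach.cons hstep' ih
    · rw [projSeqVals, List.filter_cons, if_neg (by simpa using hmem)]
      rw [heq] at ih
      exact ih

end ProjAux

/-- `SeqPQ` is closed under projection: for every `e ∈ SeqPQ` and every set
`Dset` of data values, the projection `e|Dset` belongs to `SeqPQ`. -/
theorem seqPQ_closed_under_projection {D : Type u} {P : Type v} [PartialOrder P]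
    (e : List (PQOp D P)) (he : SeqPQ e) (Dset : Set D) :
    SeqPQ (projSeqVals Dset e) := by
  obtain ⟨q, hq⟩ := he
  refine ⟨filterState Dset q, ?_⟩
  have := pqReach_filter (Dset := Dset) hq
  have hinit : filterState Dset (pqInit D P) = pqInit D P := by
    funext p; simp [filterState, pqInit]
  rwa [hinit] at this
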